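/- Let X be a smooth projective fourfold with K_X nef, K_X^4 = 0, and K_X^2·c_2(X) > 0 (where we also assume vanishing of intersections involving higher powers of K_X as forced by K_X^4 = K_X^3·c_1 = 0). Suppose H^i(X, O_X(mK_X)) = 0 for i ≥ 2 and all m ≥ 1. Then h^0(X, O_X(mK_X)) grows at least like a positive constant times m^2, hence κ(X, K_X) ≥ 2. -/

import Mathlib

open Filter

/-! When the cohomology of `mK_X` vanishes in degrees `≥ 2`, the Euler characteristic is
`h⁰ - h¹ ≤ h⁰`. With `K_X⁴ = K_X³·c₁ = K_X²·c₁² = 0`, Hirzebruch–Riemann–Roch makes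
`χ(mK_X)` a quadratic polynomial in `m` with leading coefficient `K_X²·c₂ / 24 > 0`,
so `h⁰(mK_X)` eventually dominates half of its leading term. -/

lemma alternating_sum_le_of_eq_zero_of_two_le (f : ℕ → ℕ) (hf : ∀ i, 2 ≤ i → f i = 0)
    (n : ℕ) : ∑ i ∈ Finset.range n, (-1) ^ i * (f i : ℤ) ≤ f 0 := by
  induction n with
  | zero => simp
  | succ n ih =>
    rw [Finset.sum_range_succ]
    rcases n with _ | _ | n
    · simp
    · simp
    · rw [hf _ (by omega)]
      simpa using ih

lemma eventually_half_mul_sq_le_quadratic {a : ℝ} (ha : 0 < a) (b c : ℝ) :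
    ∀ᶠ x : ℝ in atTop, a / 2 * x ^ 2 ≤ a * x ^ 2 + b * x + c := by
  filter_upwards [eventually_ge_atTop 1, eventually_ge_atTop (2 * (|b| + |c|) / a)]
    with x hx1 hxb
  have hbc : 2 * (|b| + |c|) ≤ a * x := by rwa [div_le_iff₀' ha] at hxb
  nlinarith [neg_abs_le b, neg_abs_le c, abs_nonneg b, abs_nonneg c]

theorem stmt15_general (h : ℕ → ℕ → ℕ) (chi : ℕ → ℤ)
    (K4 K3c1 K2c1sq K2c2 Kc1c2 chiO : ℤ) (kappa : ℤ)
    (hchi : ∀ m, chi m = ∑ i ∈ Finset.range 5, (-1) ^ i * (h i m : ℤ))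
    (hHRR : ∀ m : ℕ, (chi m : ℚ) =
      ((m : ℚ) ^ 4 * (K4 : ℚ)) / 24 + ((m : ℚ) ^ 3 * (K3c1 : ℚ)) / 12
        + ((m : ℚ) ^ 2 * ((K2c1sq : ℚ) + (K2c2 : ℚ))) / 24
        + ((m : ℚ) * (Kc1c2 : ℚ)) / 24 + (chiO : ℚ))
    (hK4 : K4 = 0) (hK3c1 : K3c1 = -K4) (hK2c1sq : K2c1sq = K4)
    (hK2c2 : 0 < K2c2)
    (hvanish : ∀ i, 2 ≤ i → ∀ m, 1 ≤ m → h i m = 0)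
    (hkappa_max : ∀ e : ℕ,
      (∃ C > (0 : ℝ), ∀ᶠ m : ℕ in atTop, C * (m : ℝ) ^ e ≤ (h 0 m : ℝ)) →
        (e : ℤ) ≤ kappa) :
    (∃ C > (0 : ℝ), ∀ᶠ m : ℕ in atTop, C * (m : ℝ) ^ 2 ≤ (h 0 m : ℝ)) ∧
      (2 : ℤ) ≤ kappa := by
  have chi_le : ∀ m, 1 ≤ m → (chi m : ℝ) ≤ h 0 m := fun m hm => by
    exact_mod_cast hchi m ▸ alternating_sum_le_of_eq_zero_of_two_le (h · m)
      (fun i hi => hvanish i hi m hm) 5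
  have chi_eq : ∀ m : ℕ, (chi m : ℝ) = K2c2 / 24 * (m : ℝ) ^ 2 + Kc1c2 / 24 * m + chiO := by
    intro m
    have := congrArg (Rat.cast : ℚ → ℝ) (hHRR m)
    subst hK4 hK3c1 hK2c1sq
    push_cast at this
    linarith
  have ha : (0 : ℝ) < K2c2 / 24 := by positivity
  have growth : ∃ C > (0 : ℝ), ∀ᶠ m : ℕ in atTop, C * (m : ℝ) ^ 2 ≤ (h 0 m : ℝ) := by
    refine ⟨K2c2 / 24 / 2, by positivity, ?_⟩
    filter_upwards [eventually_ge_atTop 1, tendsto_natCast_atTop_atTop.eventually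
      (eventually_half_mul_sq_le_quadratic ha (Kc1c2 / 24) chiO)] with m hm hquad
    linarith [chi_eq m, chi_le m hm]
  exact ⟨growth, hkappa_max 2 growth⟩

/-- Let `X` be a smooth projective fourfold with `K_X` nef, `K_X⁴ = 0` and
`K_X²·c₂(X) > 0` (with the vanishings `K_X³·c₁ = -K_X⁴ = 0`, `K_X²·c₁² = K_X⁴ = 0`
forced by `K_X⁴ = 0`).  Model: `h i m = h^i(X, O_X(mK_X))`,
`chi m = χ(X, O_X(mK_X)) = Σ_{i=0}^{4} (-1)^i h^i(X, O_X(mK_X))`, given by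
Hirzebruch–Riemann–Roch (`hHRR`); `KNef` records nefness of `K_X`; `kappa = κ(X, K_X)`
is the maximal growth exponent of `m ↦ h^0(X, O_X(mK_X))` (`hkappa_max`).
Suppose `H^i(X, O_X(mK_X)) = 0` for `i ≥ 2` and all `m ≥ 1`.  Then
`h^0(X, O_X(mK_X))` grows at least like a positive constant times `m²`, hence
`κ(X, K_X) ≥ 2`. -/
theorem stmt15 (h : ℕ → ℕ → ℕ) (chi : ℕ → ℤ)
    (K4 K3c1 K2c1sq K2c2 Kc1c2 chiO : ℤ) (kappa : ℤ)
    (KNef : Prop) (hnef : KNef)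
    (hchi : ∀ m, chi m = ∑ i ∈ Finset.range 5, (-1) ^ i * (h i m : ℤ))
    (hHRR : ∀ m : ℕ, (chi m : ℚ) =
      ((m : ℚ) ^ 4 * (K4 : ℚ)) / 24 + ((m : ℚ) ^ 3 * (K3c1 : ℚ)) / 12
        + ((m : ℚ) ^ 2 * ((K2c1sq : ℚ) + (K2c2 : ℚ))) / 24
        + ((m : ℚ) * (Kc1c2 : ℚ)) / 24 + (chiO : ℚ))
    (hK4 : K4 = 0) (hK3c1 : K3c1 = -K4) (hK2c1sq : K2c1sq = K4)
    (hK2c2 : 0 < K2c2)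
    (hvanish : ∀ i, 2 ≤ i → ∀ m, 1 ≤ m → h i m = 0)
    (hkappa_max : ∀ e : ℕ,
      (∃ C > (0 : ℝ), ∀ᶠ m : ℕ in atTop, C * (m : ℝ) ^ e ≤ (h 0 m : ℝ)) →
        (e : ℤ) ≤ kappa) :
    (∃ C > (0 : ℝ), ∀ᶠ m : ℕ in atTop, C * (m : ℝ) ^ 2 ≤ (h 0 m : ℝ)) ∧
      (2 : ℤ) ≤ kappa :=
  stmt15_general h chi K4 K3c1 K2c1sq K2c2 Kc1c2 chiO kappa hchi hHRR hK4 hK3c1 hK2c1sq hK2c2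
    hvanish hkappa_max
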